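/- arXiv:2207.00608 — 5 statements merged into one kernel-verified Lean document; each statement's English description precedes it below -/
import Mathlib

section
/- Let G be a finite group with a core-free subgroup H satisfying |H|² = |G|. Then there is no g ∈ G with H ∩ H^g = 1. (Proof idea: if H ∩ H^g = 1 then the double coset HgH has size |H|² = |G|, so G = HgH, forcing H = H^g, a contradiction with H ∩ H^g = 1 and H nontrivial.) -/
/-- The conjugate subgroup `g⁻¹ H g`. -/
def conjSub {G : Type*} [Group G] (H : Subgroup G) (g : G) : Subgroup G :=
  H.map (MulAut.conj g).toMonoidHom

/-- If `H` is a nontrivial core-free subgroup of a finite group `G` with `|H|² = |G|`,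
then there is no `g ∈ G` with `H ∩ H^g = 1`. -/
theorem stmt_1 {G : Type*} [Group G] [Finite G] (H : Subgroup G)
    (hcf : H.normalCore = ⊥) (hne : H ≠ ⊥) (hcard : Nat.card H ^ 2 = Nat.card G) :
    ¬ ∃ g : G, H ⊓ conjSub H g = ⊥ := by
  rintro ⟨g, hg⟩
  set f : H × H → G := fun p => (p.1 : G) * g * (p.2 : G) with hf
  have hinj : Function.Injective f := by
    rintro ⟨h₁, h₂⟩ ⟨k₁, k₂⟩ h
    have h' : (h₁ : G) * g * h₂ = (k₁ : G) * g * k₂ := h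
    have key : ((k₁ : G)⁻¹ * h₁) ∈ H ⊓ conjSub H g := by
      constructor
      · exact H.mul_mem (H.inv_mem k₁.2) h₁.2
      · refine ⟨(k₂ : G) * (h₂ : G)⁻¹, H.mul_mem k₂.2 (H.inv_mem h₂.2), ?_⟩
        simp only [MulEquiv.coe_toMonoidHom, MulAut.conj_apply]
        calc g * ((k₂ : G) * (h₂ : G)⁻¹) * g⁻¹
            = (k₁ : G)⁻¹ * ((k₁ : G) * g * k₂) * (h₂ : G)⁻¹ * g⁻¹ := by group
          _ = (k₁ : G)⁻¹ * ((h₁ : G) * g * h₂) * (h₂ : G)⁻¹ * g⁻¹ := by rw [h']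
          _ = (k₁ : G)⁻¹ * h₁ := by group
    rw [hg, Subgroup.mem_bot] at key
    have e1 : (h₁ : G) = k₁ := by
      have := mul_eq_one_iff_inv_eq.mp key
      simpa using this.symm
    have e2 : (h₂ : G) = k₂ := by
      rw [e1] at h'
      exact mul_left_cancel (mul_left_cancel ((mul_assoc _ _ _).symm.trans
        (h'.trans (mul_assoc _ _ _))))
    exact Prod.ext (Subtype.ext e1) (Subtype.ext e2)
  have hbij : Function.Bijective f :=
    (Nat.bijective_iff_injective_and_card f).mpr ⟨hinj, by
      simp [Nat.card_prod, ← hcard, sq]⟩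
  obtain ⟨⟨h₁, h₂⟩, hp⟩ := hbij.2 1
  have hgH : g ∈ H := by
    have heq : g = (h₁ : G)⁻¹ * (h₂ : G)⁻¹ := by
      have hp' : (h₁ : G) * g * h₂ = 1 := hp
      calc g = (h₁ : G)⁻¹ * ((h₁ : G) * g * h₂) * (h₂ : G)⁻¹ := by group
        _ = (h₁ : G)⁻¹ * 1 * (h₂ : G)⁻¹ := by rw [hp']
        _ = (h₁ : G)⁻¹ * (h₂ : G)⁻¹ := by group
    rw [heq]
    exact H.mul_mem (H.inv_mem h₁.2) (H.inv_mem h₂.2)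
  have hle : H ≤ conjSub H g := by
    intro x hx
    refine ⟨g⁻¹ * x * g, H.mul_mem (H.mul_mem (H.inv_mem hgH) hx) hgH, ?_⟩
    simp [MulAut.conj_apply]
    group
  have : H = ⊥ := by
    rw [← hg, inf_eq_left.mpr hle]
  exact hne this
end

section
/- Let G be a finite group with a minimal normal subgroup N isomorphic to (C_p)^a for a prime p and a ≥ 5. Then there exist two non-conjugate core-free subgroups H₁, H₂ of G such that for each i and all g ∈ G, H_i ∩ H_i^g ≠ 1. -/
/-- `N` is a minimal normal subgroup of `G`. -/
def IsMinNormal {G : Type*} [Group G] (N : Subgroup G) : Prop :=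
  N ≠ ⊥ ∧ N.Normal ∧ ∀ M : Subgroup G, M.Normal → M ≤ N → M = ⊥ ∨ M = N

section aux
variable {G : Type*} [Group G] [Finite G]

omit [Finite G] in
lemma conjSub_card (H : Subgroup G) (g : G) : Nat.card (conjSub H g) = Nat.card H :=
  (Nat.card_congr (Subgroup.equivMapOfInjective H _ (MulAut.conj g).injective).toEquiv).symm

omit [Finite G] in
lemma conjSub_le {N H : Subgroup G} (hN : N.Normal) (hH : H ≤ N) (g : G) :
    conjSub H g ≤ N := by
  rintro x ⟨y, hy, rfl⟩
  exact hN.conj_mem y (hH hy) g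

lemma inf_ne_bot_of_card {N H K : Subgroup G} (hH : H ≤ N) (hK : K ≤ N)
    (hc : Nat.card N < Nat.card H * Nat.card K) : H ⊓ K ≠ ⊥ := by
  intro hbot
  have hinj : Function.Injective
      (fun x : H × K => (⟨x.1.1 * x.2.1, mul_mem (hH x.1.2) (hK x.2.2)⟩ : N)) := by
    rintro ⟨⟨h1, hh1⟩, ⟨k1, hk1⟩⟩ ⟨⟨h2, hh2⟩, ⟨k2, hk2⟩⟩ heq
    simp only [Subtype.mk.injEq] at heq
    have key : h2⁻¹ * h1 = k2 * k1⁻¹ := by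
      have h' := congrArg (fun x => h2⁻¹ * x * k1⁻¹) heq
      simpa [mul_assoc] using h'
    have hmem : h2⁻¹ * h1 ∈ H ⊓ K := by
      constructor
      · exact H.mul_mem (H.inv_mem hh2) hh1
      · rw [key]
        exact K.mul_mem hk2 (K.inv_mem hk1)
    rw [hbot, Subgroup.mem_bot] at hmem
    have h12 : h1 = h2 := by
      have := mul_eq_one_iff_inv_eq.mp hmem
      simpa [eq_comm] using this.symm
    have k12 : k1 = k2 := by
      subst h12
      exact mul_left_cancel heq
    simp [h12, k12]
  have := Nat.card_le_card_of_injective _ hinj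
  rw [Nat.card_prod] at this
  omega
end aux

/-- If a finite group `G` has a minimal normal subgroup `N ≅ (C_p)^a` with `p` prime and
`a ≥ 5`, then `G` has two non-conjugate core-free subgroups `H₁, H₂` all of whose pairs of
conjugates intersect nontrivially. -/
theorem stmt_3 {G : Type*} [Group G] [Finite G] (N : Subgroup G) (p a : ℕ)
    (hp : p.Prime) (ha : 5 ≤ a) (hmin : IsMinNormal N)
    (hiso : Nonempty (N ≃* Multiplicative (Fin a → ZMod p))) :
    ∃ H₁ H₂ : Subgroup G,
      H₁.normalCore = ⊥ ∧ H₂.normalCore = ⊥ ∧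
      (∀ g : G, conjSub H₁ g ≠ H₂) ∧
      (∀ g : G, H₁ ⊓ conjSub H₁ g ≠ ⊥) ∧
      (∀ g : G, H₂ ⊓ conjSub H₂ g ≠ ⊥) := by
  obtain ⟨hbot, hnorm, hminimal⟩ := hmin
  obtain ⟨e⟩ := hiso
  haveI : Fact p.Prime := ⟨hp⟩
  have hcardN : Nat.card N = p ^ a := by
    rw [Nat.card_congr e.toEquiv]
    simp [Nat.card_fun, Nat.card_zmod]
  have hp1 : 1 < p := hp.one_lt
  -- subgroups of N of card p^(a-1), p^(a-2)
  have build : ∀ k : ℕ, k ≤ a → ∃ H : Subgroup G, H ≤ N ∧ Nat.card H = p ^ k := by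
    intro k hk
    obtain ⟨K, hK⟩ := Sylow.exists_subgroup_card_pow_prime (G := N) p
      (n := k) (by rw [hcardN]; exact pow_dvd_pow p hk)
    refine ⟨K.map N.subtype, Subgroup.map_subtype_le K, ?_⟩
    rw [← hK]
    exact (Nat.card_congr (Subgroup.equivMapOfInjective K _ N.subtype_injective).toEquiv).symm
  obtain ⟨H₁, hH₁le, hH₁card⟩ := build (a - 1) (by omega)
  obtain ⟨H₂, hH₂le, hH₂card⟩ := build (a - 2) (by omega)
  have hne : ∀ (H : Subgroup G), H ≤ N → Nat.card H < Nat.card N → H.normalCore = ⊥ := by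
    intro H hle hlt
    rcases hminimal H.normalCore H.normalCore_normal
      (le_trans H.normalCore_le hle) with h | h
    · exact h
    · exfalso
      have : N ≤ H := h ▸ H.normalCore_le
      have hEq : H = N := le_antisymm hle this
      rw [hEq] at hlt
      exact lt_irrefl _ hlt
  have hlt1 : Nat.card H₁ < Nat.card N := by
    rw [hH₁card, hcardN]
    exact Nat.pow_lt_pow_right hp1 (by omega)
  have hlt2 : Nat.card H₂ < Nat.card N := by
    rw [hH₂card, hcardN]
    exact Nat.pow_lt_pow_right hp1 (by omega)
  refine ⟨H₁, H₂, hne H₁ hH₁le hlt1, hne H₂ hH₂le hlt2, ?_, ?_, ?_⟩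
  · intro g heq
    have : Nat.card H₁ = Nat.card H₂ := by rw [← conjSub_card H₁ g, heq]
    rw [hH₁card, hH₂card] at this
    have := Nat.pow_right_injective hp.two_le this
    omega
  · intro g
    refine inf_ne_bot_of_card hH₁le (conjSub_le hnorm hH₁le g) ?_
    rw [conjSub_card, hH₁card, hcardN, ← pow_add]
    exact Nat.pow_lt_pow_right hp1 (by omega)
  · intro g
    refine inf_ne_bot_of_card hH₂le (conjSub_le hnorm hH₂le g) ?_
    rw [conjSub_card, hH₂card, hcardN, ← pow_add]
    exact Nat.pow_lt_pow_right hp1 (by omega)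
end

section
/- Let G be a finite group with minimal normal subgroups N₁ ≅ (C_p)^a and N₂ ≅ (C_q)^b where a ≥ 3 and b ≥ 2 (p, q primes, possibly equal but N₁ ≠ N₂). Then G has two non-conjugate core-free subgroups H₁, H₂ with b(G,H_i) ≥ 3 for i = 1,2. -/
/-!
Take `H₁ = K₁ < N₁` of index `p` and `H₂ = K₁ K₂` with `K₂ < N₂` of index `q`. All conjugates
of `K₁` lie in the normal subgroup `N₁`, and `[N₁ : K₁]² = p² < p^a = |N₁|`, so no two of them
meet trivially; the same then holds for `H₂ ⊇ H₁`. A normal subgroup inside `K₁` or `K₂` is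
trivial by minimality, and so is one inside `K₁ K₂`, by projecting onto the factors of
`N₁ × N₂`. Finally `H₂` is not conjugate to `H₁`, since it is not contained in `N₁`.
-/

section

open Subgroup

variable {G : Type*} [Group G]

lemma conjSub_mono {K L : Subgroup G} (h : K ≤ L) (g : G) : conjSub K g ≤ conjSub L g :=
  map_mono h

lemma conjSub_le_of_le_normal {K N : Subgroup G} [N.Normal] (hK : K ≤ N) (g : G) :
    conjSub K g ≤ N :=
  (conjSub_mono hK g).trans (Normal.map_conj_eq N g).le

lemma relIndex_conjSub (K N : Subgroup G) [N.Normal] (g : G) :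
    (conjSub K g).relIndex N = K.relIndex N := by
  have := relIndex_map_map_of_injective (f := (MulAut.conj g).toMonoidHom) K N
    (MulAut.conj g).injective
  rwa [MulEquiv.toMonoidHom_eq_coe, Normal.map_conj_eq N g] at this

lemma inf_conjSub_ne_bot {K N : Subgroup G} [N.Normal] (hK : K.relIndex N ^ 2 < Nat.card N)
    (g : G) : K ⊓ conjSub K g ≠ ⊥ := by
  intro h
  have := relIndex_inf_le (H := K) (K := conjSub K g) (L := N)
  rw [h, relIndex_bot_left, relIndex_conjSub, ← sq] at this
  omega

lemma exists_relIndex_eq_prime {p n : ℕ} [Fact p.Prime] (N : Subgroup G) [Finite N]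
    (hN : Nat.card N = p ^ n) (hn : 0 < n) : ∃ K ≤ N, K.relIndex N = p := by
  obtain ⟨K, hK⟩ := Sylow.exists_subgroup_card_pow_prime (G := N) p (n := n - 1)
    (hN ▸ pow_dvd_pow p (Nat.sub_le n 1))
  refine ⟨K.map N.subtype, map_subtype_le K, ?_⟩
  rw [relIndex, subgroupOf, comap_map_eq_self_of_injective N.subtype_injective]
  have := K.card_mul_index
  rw [hK, hN, ← pow_sub_one_mul hn.ne'] at this
  exact Nat.eq_of_mul_eq_mul_left (by have := (Fact.out : p.Prime).pos; positivity) this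

lemma sup_inf_le_of_le_of_inf_eq_bot {K L N : Subgroup G} [L.Normal] (hK : K ≤ N)
    (hLN : L ⊓ N = ⊥) : (K ⊔ L) ⊓ N ≤ K := by
  rintro x ⟨hx, hxN⟩
  obtain ⟨k, hk, l, hl, rfl⟩ := mem_sup_of_normal_right.mp hx
  have hl1 : l ∈ L ⊓ N := ⟨hl, by simpa using N.mul_mem (N.inv_mem (hK hk)) hxN⟩
  rw [hLN, mem_bot] at hl1
  simpa [hl1] using hk

namespace IsMinNormal

lemma inf_eq_bot {N₁ N₂ : Subgroup G} (h₁ : IsMinNormal N₁) (h₂ : IsMinNormal N₂)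
    (hne : N₁ ≠ N₂) : N₁ ⊓ N₂ = ⊥ := by
  have := h₁.2.1
  have := h₂.2.1
  refine (h₁.2.2 _ inferInstance inf_le_left).resolve_right fun h => ?_
  rcases h₂.2.2 N₁ h₁.2.1 (inf_eq_left.mp h) with h | h
  exacts [h₁.1 h, hne h]

lemma eq_bot_of_le {N K M : Subgroup G} (hN : IsMinNormal N) (hM : M.Normal) (hMK : M ≤ K)
    (hKN : K ≤ N) (hK : K ≠ N) : M = ⊥ :=
  (hN.2.2 M hM (hMK.trans hKN)).resolve_right fun h => hK (le_antisymm hKN (h ▸ hMK))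

lemma normalCore_eq_bot {N K : Subgroup G} (hN : IsMinNormal N) (hKN : K ≤ N) (hK : K ≠ N) :
    K.normalCore = ⊥ :=
  hN.eq_bot_of_le (normalCore_normal K) (normalCore_le K) hKN hK

lemma normalCore_sup_eq_bot {N₁ N₂ K₁ K₂ : Subgroup G} (h₁ : IsMinNormal N₁)
    (h₂ : IsMinNormal N₂) (hdisj : N₁ ⊓ N₂ = ⊥) (hK₁N : K₁ ≤ N₁) (hK₁ : K₁ ≠ N₁)
    (hK₂N : K₂ ≤ N₂) (hK₂ : K₂ ≠ N₂) : (K₁ ⊔ K₂).normalCore = ⊥ := by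
  set M := (K₁ ⊔ K₂).normalCore
  have := h₁.2.1
  have := h₂.2.1
  have hMK : M ≤ K₁ ⊔ K₂ := normalCore_le _
  -- `(M ⊔ N₂) ⊓ N₁` is the projection of `M` to the factor `N₁` of `N₁ × N₂`.
  have hP₁ : (M ⊔ N₂) ⊓ N₁ = ⊥ := by
    refine h₁.eq_bot_of_le inferInstance ?_ hK₁N hK₁
    have hM : M ⊔ N₂ ≤ K₁ ⊔ N₂ := sup_le (hMK.trans (sup_le_sup_left hK₂N _)) le_sup_right
    exact (inf_le_inf_right _ hM).trans
      (sup_inf_le_of_le_of_inf_eq_bot hK₁N (by rw [inf_comm, hdisj]))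
  have hP₂ : (M ⊔ N₁) ⊓ N₂ = ⊥ := by
    refine h₂.eq_bot_of_le inferInstance ?_ hK₂N hK₂
    have hM : M ⊔ N₁ ≤ K₂ ⊔ N₁ :=
      sup_le (hMK.trans (sup_le (hK₁N.trans le_sup_right) le_sup_left)) le_sup_right
    exact (inf_le_inf_right _ hM).trans (sup_inf_le_of_le_of_inf_eq_bot hK₂N hdisj)
  have hMN₂ : M ≤ N₂ :=
    calc M ≤ (N₂ ⊔ N₁) ⊓ (M ⊔ N₂) :=
          le_inf (hMK.trans (sup_le (hK₁N.trans le_sup_right) (hK₂N.trans le_sup_left)))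
            le_sup_left
      _ ≤ N₂ := sup_inf_le_of_le_of_inf_eq_bot le_sup_right (by rw [inf_comm, hP₁])
  exact eq_bot_iff.mpr (hP₂ ▸ le_inf le_sup_left hMN₂)

end IsMinNormal

end

/-- If a finite group `G` has distinct minimal normal subgroups `N₁ ≅ (C_p)^a` and
`N₂ ≅ (C_q)^b` with `a ≥ 3` and `b ≥ 2`, then `G` has two non-conjugate core-free
subgroups `H₁, H₂` with `b(G, Hᵢ) ≥ 3`. -/
theorem stmt_4 {G : Type*} [Group G] [Finite G] (N₁ N₂ : Subgroup G) (p q a b : ℕ)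
    (hp : p.Prime) (hq : q.Prime) (ha : 3 ≤ a) (hb : 2 ≤ b) (hne : N₁ ≠ N₂)
    (hmin₁ : IsMinNormal N₁) (hmin₂ : IsMinNormal N₂)
    (hiso₁ : Nonempty (N₁ ≃* Multiplicative (Fin a → ZMod p)))
    (hiso₂ : Nonempty (N₂ ≃* Multiplicative (Fin b → ZMod q))) :
    ∃ H₁ H₂ : Subgroup G,
      H₁.normalCore = ⊥ ∧ H₂.normalCore = ⊥ ∧
      (∀ g : G, conjSub H₁ g ≠ H₂) ∧
      (∀ g : G, H₁ ⊓ conjSub H₁ g ≠ ⊥) ∧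
      (∀ g : G, H₂ ⊓ conjSub H₂ g ≠ ⊥) := by
  obtain ⟨e₁⟩ := hiso₁
  obtain ⟨e₂⟩ := hiso₂
  have := Fact.mk hp
  have := Fact.mk hq
  have := hmin₁.2.1
  have hcard₁ : Nat.card N₁ = p ^ a := by simp [Nat.card_congr e₁.toEquiv]
  have hcard₂ : Nat.card N₂ = q ^ b := by simp [Nat.card_congr e₂.toEquiv]
  obtain ⟨K₁, hK₁N, hK₁⟩ := exists_relIndex_eq_prime N₁ hcard₁ (by omega)
  obtain ⟨K₂, hK₂N, hK₂⟩ := exists_relIndex_eq_prime N₂ hcard₂ (by omega)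
  have hdisj := hmin₁.inf_eq_bot hmin₂ hne
  have hK₁ne : K₁ ≠ N₁ := by rintro rfl; simp [hp.ne_one.symm] at hK₁
  have hK₂ne : K₂ ≠ N₂ := by rintro rfl; simp [hq.ne_one.symm] at hK₂
  have hK₂bot : K₂ ≠ ⊥ := by
    rintro rfl
    rw [Subgroup.relIndex_bot_left, hcard₂, Nat.pow_eq_self_iff hq.one_lt] at hK₂
    omega
  have hH₁ : ∀ g, K₁ ⊓ conjSub K₁ g ≠ ⊥ :=
    inf_conjSub_ne_bot (by rw [hK₁, hcard₁]; exact Nat.pow_lt_pow_right hp.one_lt (by omega))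
  refine ⟨K₁, K₁ ⊔ K₂, hmin₁.normalCore_eq_bot hK₁N hK₁ne,
    hmin₁.normalCore_sup_eq_bot hmin₂ hdisj hK₁N hK₁ne hK₂N hK₂ne, fun g h => hK₂bot ?_, hH₁,
    fun g => ne_bot_of_le_ne_bot (hH₁ g) (inf_le_inf le_sup_left (conjSub_mono le_sup_left g))⟩
  rw [eq_bot_iff, ← hdisj]
  exact le_inf (le_sup_right.trans (h ▸ conjSub_le_of_le_normal hK₁N g)) hK₂N
end

section
/- Every finite group G of composite order has a proper subgroup H with |H|² ≥ |G|, provided G is solvable. (Solvable case of the Feit–Kantor–Liebeck theorem.) -/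
/-!
Let `N` be a maximal proper normal subgroup of `G`. Then `G ⧸ N` is simple and solvable, hence
cyclic of prime order `p`, so `|G| = p · |N|`. If `p ≤ |N|`, then `N` itself satisfies
`|N|² ≥ |G|`. Otherwise a cyclic subgroup of order `p` (Cauchy) does, and it is proper because
`|G|` is not prime.
-/

open QuotientGroup

theorem QuotientGroup.isSimpleGroup_of_maximal_normal {G : Type*} [Group G] {N : Subgroup G}
    [N.Normal] (hN : N ≠ ⊤) (hmax : ∀ M : Subgroup G, M.Normal → N ≤ M → M = N ∨ M = ⊤) :
    IsSimpleGroup (G ⧸ N) := by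
  have : Nontrivial (G ⧸ N) := QuotientGroup.nontrivial_iff.mpr hN
  refine ⟨fun M hM => ?_⟩
  have hinj := Subgroup.comap_injective (mk'_surjective N)
  rcases hmax _ (hM.comap (mk' N)) (le_comap_mk' N M) with h | h
  · left
    exact hinj (by rw [h, MonoidHom.comap_bot, ker_mk'])
  · right
    exact hinj (by rw [h, Subgroup.comap_top])

theorem Group.IsSolvable.exists_normal_index_prime {G : Type*} [Group G] [Finite G]
    [Nontrivial G] [Group.IsSolvable G] : ∃ N : Subgroup G, N.Normal ∧ N.index.Prime := by
  obtain ⟨N, ⟨hNormal, hN⟩, hNmax⟩ :=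
    (Set.toFinite {N : Subgroup G | N.Normal ∧ N ≠ ⊤}).exists_maximal
      ⟨⊥, inferInstance, bot_ne_top⟩
  have := hNormal
  have := isSimpleGroup_of_maximal_normal hN fun M hM hle =>
    (ne_or_eq M ⊤).imp_left fun hMtop => (hNmax ⟨hM, hMtop⟩ hle).antisymm hle
  let : CommGroup (G ⧸ N) :=
    { mul_comm := IsSimpleGroup.comm_iff_isSolvable.mpr inferInstance }
  exact ⟨N, hNormal, IsSimpleGroup.prime_card⟩

theorem Subgroup.exists_ne_top_card_le_card_sq_of_index_prime {G : Type*} [Group G] [Finite G]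
    {N : Subgroup G} (hN : N.index.Prime) (hG : ¬ (Nat.card G).Prime) :
    ∃ H : Subgroup G, H ≠ ⊤ ∧ Nat.card G ≤ Nat.card H ^ 2 := by
  set p := N.index
  have hcard : Nat.card G = p * Nat.card N := N.index_mul_card.symm
  rcases le_or_gt p (Nat.card N) with hle | hlt
  · refine ⟨N, fun h => hN.ne_one (Subgroup.index_eq_one.mpr h), ?_⟩
    rw [hcard, sq]
    exact Nat.mul_le_mul_right _ hle
  · have : Fact p.Prime := ⟨hN⟩
    obtain ⟨g, hg⟩ := exists_prime_orderOf_dvd_card' p (Dvd.intro _ hcard.symm)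
    have hcard_g : Nat.card (Subgroup.zpowers g) = p := by rw [Nat.card_zpowers, hg]
    refine ⟨Subgroup.zpowers g, fun h => hG ?_, ?_⟩
    · rwa [← Subgroup.card_top (G := G), ← h, hcard_g]
    · rw [hcard_g, hcard, sq]
      exact Nat.mul_le_mul_left p hlt.le

/-- Every finite solvable group of composite order has a proper subgroup `H` with
`|H|² ≥ |G|`. -/
theorem stmt_7 {G : Type*} [Group G] [Finite G] [Group.IsSolvable G]
    (h1 : Nat.card G ≠ 1) (hcomp : ¬ (Nat.card G).Prime) :
    ∃ H : Subgroup G, H ≠ ⊤ ∧ Nat.card G ≤ Nat.card H ^ 2 := by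
  have : Nontrivial G := Finite.one_lt_card_iff_nontrivial.mp <| by
    have := Nat.card_pos (α := G)
    omega
  obtain ⟨N, -, hN⟩ := Group.IsSolvable.exists_normal_index_prime (G := G)
  exact N.exists_ne_top_card_le_card_sq_of_index_prime hN hcomp
end

section
/- Let G be a finite group with Φ(G) = E(G) = 1, written G = F(G) ⋊ L. Let A be an abelian subgroup of G with A ∩ F(G) = 1, and suppose A acts semisimply on F(G) (i.e., F(G) is a direct product of minimal normal subgroups of F(G)⋊A). Then there exists x ∈ F(G) with A ∩ A^x = 1; in particular b(G,A) ≤ 2. -/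
/-- `K` is a subnormal subgroup of `G`. -/
def IsSubnormal {G : Type*} [Group G] (K : Subgroup G) : Prop :=
  ∃ (n : ℕ) (c : ℕ → Subgroup G), c 0 = K ∧ c n = ⊤ ∧
    ∀ i < n, c i ≤ c (i + 1) ∧ ((c i).subgroupOf (c (i + 1))).Normal

/-- A group is quasisimple if it is perfect and its central quotient is simple. -/
def IsQuasisimple (K : Type*) [Group K] : Prop :=
  commutator K = ⊤ ∧ IsSimpleGroup (K ⧸ Subgroup.center K)

/-- The layer `E(G)` is trivial. -/
def TrivialLayer (G : Type*) [Group G] : Prop :=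
  ∀ K : Subgroup G, IsSubnormal K → IsQuasisimple K → K = ⊥

/-- `F` is the Fitting subgroup of `G`: the largest nilpotent normal subgroup. -/
def IsFitting {G : Type*} [Group G] (F : Subgroup G) : Prop :=
  F.Normal ∧ Group.IsNilpotent F ∧
    ∀ N : Subgroup G, N.Normal → Group.IsNilpotent N → N ≤ F

/-- `M` is a minimal normal subgroup of `F ⋊ A` (i.e. a minimal nontrivial subgroup of
`F` invariant under conjugation by all elements of `⟨F, A⟩`). -/
def IsMinFANormal {G : Type*} [Group G] (F A M : Subgroup G) : Prop :=
  M ≤ F ∧ M ≠ ⊥ ∧ (∀ g ∈ F ⊔ A, ∀ x ∈ M, g * x * g⁻¹ ∈ M) ∧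
    ∀ M' : Subgroup G, M' ≤ M → M' ≠ ⊥ →
      (∀ g ∈ F ⊔ A, ∀ x ∈ M', g * x * g⁻¹ ∈ M') → M' = M


/-!
Each minimal `FA`-invariant factor `Nᵢ` is normal in the nilpotent group `F`, so it meets `Z(F)`;
by minimality `Nᵢ ≤ Z(F)`, and `F` is abelian. Take `x = ∏ xᵢ` with `1 ≠ xᵢ ∈ Nᵢ`. An element
`a ∈ A ∩ A^x` satisfies `a^x ∈ aF ∩ A = {a}`, so it centralizes `x`, hence every `xᵢ` by the
independence of the `Nᵢ`. As `A` and `F` are abelian, `C_{Nᵢ}(a)` is then a nontrivial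
`FA`-invariant subgroup, so `a` centralizes `F`. Finally `C_G(F) ≤ F` because `E(G) = 1`: a minimal
subnormal subgroup is simple, so it either has prime order `p` and lies in `O_p(G) ≤ F`, or it is
a component.
-/

open Subgroup
open scoped Pointwise
open scoped commutatorElement

section Nilpotent

variable {G : Type*} [Group G] {N : Subgroup G}

theorem Subgroup.Normal.inf_upperCentralSeries_succ_le_center (hN : N.Normal) {m : ℕ}
    (h : N ⊓ upperCentralSeries G m = ⊥) : N ⊓ upperCentralSeries G (m + 1) ≤ center G := by
  rintro x ⟨hxN, hx⟩
  refine mem_center_iff.mpr fun y => ?_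
  have hxy : ⁅x, y⁆ ∈ N ⊓ upperCentralSeries G m := by
    refine mem_inf.mpr ⟨?_, mem_upperCentralSeries_succ_iff.mp hx y⟩
    simpa only [commutatorElement_def, mul_assoc] using
      N.mul_mem hxN (hN.conj_mem _ (N.inv_mem hxN) y)
  rw [h, mem_bot] at hxy
  exact (commutatorElement_eq_one_iff_mul_comm.mp hxy).symm

theorem Subgroup.Normal.inf_center_ne_bot [Group.IsNilpotent G] (hN : N.Normal) (h : N ≠ ⊥) :
    N ⊓ center G ≠ ⊥ := by
  intro hc
  have hbot : ∀ m, N ⊓ upperCentralSeries G m = ⊥ := by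
    intro m
    induction m with
    | zero => simp
    | succ m ih =>
      exact le_bot_iff.mp (hc ▸ le_inf inf_le_left (hN.inf_upperCentralSeries_succ_le_center ih))
  obtain ⟨n, hn⟩ := Group.IsNilpotent.nilpotent G
  exact h (by simpa [hn] using hbot n)

theorem inf_centralizer_ne_bot_of_isNilpotent {H : Subgroup G} [Group.IsNilpotent H]
    (hNH : N ≤ H) (hHN : H ≤ normalizer N) (hN : N ≠ ⊥) : N ⊓ centralizer H ≠ ⊥ := by
  have hN' : (N.subgroupOf H).Normal := (normal_subgroupOf_iff_le_normalizer hNH).mpr hHN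
  have hN'ne : N.subgroupOf H ≠ ⊥ := fun h0 =>
    hN (disjoint_self.mp ((subgroupOf_eq_bot.mp h0).mono_right hNH))
  obtain ⟨⟨z, hzN, hzZ⟩, hz1⟩ := ne_bot_iff_exists_ne_one.mp (hN'.inf_center_ne_bot hN'ne)
  refine ne_bot_iff_exists_ne_one.mpr ⟨⟨z, hzN, fun h hh => ?_⟩, ?_⟩
  · exact congrArg Subtype.val (mem_center_iff.mp hzZ ⟨h, hh⟩)
  · intro h1
    exact hz1 (Subtype.ext (Subtype.ext (congrArg Subtype.val h1 : (z : G) = 1)))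

end Nilpotent

section PCore

variable {G : Type*} [Group G] (p : ℕ)

/-- `O_p(M)`, as a subgroup of `G`. -/
def pCoreIn (M : Subgroup G) : Subgroup G :=
  sSup {T | T ≤ M ∧ IsPGroup p T ∧ M ≤ normalizer T}

variable {p} {M T : Subgroup G}

theorem le_pCoreIn (hTM : T ≤ M) (hT : IsPGroup p T) (hMT : M ≤ normalizer T) :
    T ≤ pCoreIn p M :=
  le_sSup ⟨hTM, hT, hMT⟩

variable [Finite G]

theorem pCoreIn_mem : pCoreIn p M ∈ {T | T ≤ M ∧ IsPGroup p T ∧ M ≤ normalizer T} := by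
  refine SupClosed.sSup_mem ?_ (Set.toFinite _) ⟨bot_le, IsPGroup.of_bot, le_normalizer_of_normal⟩
    subset_rfl
  rintro T₁ ⟨h₁M, h₁p, h₁n⟩ T₂ ⟨h₂M, h₂p, h₂n⟩
  exact ⟨sup_le h₁M h₂M, h₁p.to_sup_of_normal_right' h₂p (h₁M.trans h₂n),
    (le_inf h₁n h₂n).trans (normalizer_inf_normalizer_le_normalizer_sup _ _)⟩

theorem pCoreIn_le : pCoreIn p M ≤ M := pCoreIn_mem.1

theorem isPGroup_pCoreIn : IsPGroup p (pCoreIn p M) := pCoreIn_mem.2.1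

theorem le_normalizer_pCoreIn : M ≤ normalizer (pCoreIn p M : Set G) := pCoreIn_mem.2.2

theorem normalizer_le_normalizer_pCoreIn :
    normalizer (M : Set G) ≤ normalizer (pCoreIn p M : Set G) := by
  intro g hg
  set c := (MulAut.conj g).toMonoidHom
  have hMg : M.map c = M := mem_normalizer_iff_map_conj_eq.mp hg
  have hle : (pCoreIn p M).map c ≤ pCoreIn p M := by
    refine le_pCoreIn ((map_mono pCoreIn_le).trans hMg.le) (isPGroup_pCoreIn.map _) ?_
    exact hMg.ge.trans ((map_mono le_normalizer_pCoreIn).trans (le_normalizer_map _))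
  exact mem_normalizer_fintype fun x hx => hle (mem_map_of_mem c hx)

theorem pCoreIn_mono_of_normal {H K : Subgroup G} (hHK : H ≤ K) (hN : (H.subgroupOf K).Normal) :
    pCoreIn p H ≤ pCoreIn p K :=
  le_pCoreIn (pCoreIn_le.trans hHK) isPGroup_pCoreIn
    ((le_normalizer_of_normal_subgroupOf hHK).trans normalizer_le_normalizer_pCoreIn)

theorem Subgroup.IsSubnormal.pCoreIn_le_pCoreIn_top {H : Subgroup G} (hH : H.IsSubnormal) :
    pCoreIn p H ≤ pCoreIn p ⊤ := by
  induction hH with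
  | top => exact le_rfl
  | step H K hHK _ hN ih => exact (pCoreIn_mono_of_normal hHK hN).trans ih

theorem pCoreIn_top_normal : (pCoreIn p (⊤ : Subgroup G)).Normal :=
  normalizer_eq_top_iff.mp (top_le_iff.mp le_normalizer_pCoreIn)

theorem IsPGroup.le_pCoreIn_top_of_isSubnormal {S : Subgroup G} (hS : S.IsSubnormal)
    (hpS : IsPGroup p S) : S ≤ pCoreIn p ⊤ :=
  (le_pCoreIn le_rfl hpS le_normalizer).trans hS.pCoreIn_le_pCoreIn_top

end PCore

section Layer

variable {G : Type*} [Group G]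

/-- Mathlib's inductive `Subgroup.IsSubnormal` implies the chain formulation `IsSubnormal`
used by `TrivialLayer`. -/
theorem Subgroup.IsSubnormal.isSubnormal {K : Subgroup G} (hK : K.IsSubnormal) :
    _root_.IsSubnormal K := by
  obtain ⟨n, c, hmono, hnormal, h0, hn⟩ := isSubnormal_iff.mp hK
  exact ⟨n, c, h0, hn, fun i _ => ⟨hmono i.le_succ, hnormal i⟩⟩

theorem isSimpleGroup_of_minimal_isSubnormal {S : Subgroup G}
    (hS : Minimal (fun S : Subgroup G => S ≠ ⊥ ∧ S.IsSubnormal) S) : IsSimpleGroup S := by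
  have := (nontrivial_iff_ne_bot S).mpr hS.1.1
  refine ⟨fun T hT => ?_⟩
  by_cases hT0 : T.map S.subtype = ⊥
  · exact Or.inl ((map_eq_bot_iff_of_injective T S.subtype_injective).mp hT0)
  · right
    have hST : S ≤ T.map S.subtype := hS.2 ⟨hT0, hT.isSubnormal.trans' hS.1.2⟩ (map_subtype_le T)
    rwa [eq_top_iff, ← map_subtype_le_map_subtype, ← MonoidHom.range_eq_map, range_subtype]

theorem IsSimpleGroup.isQuasisimple_of_mul_ne {H : Type*} [Group H] [IsSimpleGroup H] {a b : H}
    (hab : a * b ≠ b * a) : IsQuasisimple H := by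
  refine ⟨(eq_bot_or_eq_top_of_normal _ inferInstance).resolve_left fun h0 => hab ?_, ?_⟩
  · have := commutator_mem_commutator (mem_top a) (mem_top b)
    rw [← commutator_def, h0, mem_bot] at this
    exact commutatorElement_eq_one_iff_mul_comm.mp this
  · have : Nontrivial (H ⧸ center H) :=
      QuotientGroup.nontrivial_iff.mpr fun htop => hab (mem_center_iff.mp (htop ▸ mem_top b) a)
    exact isSimpleGroup_of_surjective (QuotientGroup.mk' _) (QuotientGroup.mk'_surjective _)

variable [Finite G] {F : Subgroup G}

theorem IsFitting.le_of_isSubnormal_of_isPGroup (hF : IsFitting F) {p : ℕ} [Fact p.Prime]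
    {S : Subgroup G} (hS : S.IsSubnormal) (hpS : IsPGroup p S) : S ≤ F :=
  (hpS.le_pCoreIn_top_of_isSubnormal hS).trans
    (hF.2.2 _ pCoreIn_top_normal isPGroup_pCoreIn.isNilpotent)

theorem IsFitting.eq_bot_of_isSubnormal (hE : TrivialLayer G) (hF : IsFitting F)
    {K : Subgroup G} (hK : K.IsSubnormal) (hKF : K ⊓ F = ⊥) : K = ⊥ := by
  by_contra hK0
  obtain ⟨S, hSK, hS⟩ := exists_minimal_le_of_wellFoundedLT
    (fun S : Subgroup G => S ≠ ⊥ ∧ S.IsSubnormal) K ⟨hK0, hK⟩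
  have := isSimpleGroup_of_minimal_isSubnormal hS
  by_cases hncomm : ∃ a b : S, a * b ≠ b * a
  · obtain ⟨a, b, hab⟩ := hncomm
    exact hS.1.1 (hE S hS.1.2.isSubnormal (IsSimpleGroup.isQuasisimple_of_mul_ne hab))
  · let : CommGroup S := { mul_comm := by simpa using hncomm }
    have : Fact (Nat.card S).Prime := ⟨IsSimpleGroup.prime_card⟩
    have hSF := hF.le_of_isSubnormal_of_isPGroup hS.1.2 (IsPGroup.of_card (pow_one _).symm)
    exact hS.1.1 (le_bot_iff.mp (hKF ▸ le_inf hSK hSF))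

end Layer

section Centralizer

variable {G : Type*} [Group G] [Finite G] {F L : Subgroup G}

/-- With `K = L ∩ C_G(F)` we get `C_G(F) = F K` with `F` central, so `K ⊴ C_G(F) ⊴ G`; as
`K ∩ F = 1`, the absence of components forces `K = 1`. -/
theorem IsFitting.centralizer_le (hE : TrivialLayer G) (hF : IsFitting F)
    (hFab : F ≤ centralizer F) (hL : F.IsComplement' L) : centralizer F ≤ F := by
  have := hF.1
  set C := centralizer (F : Set G)
  have hdecomp : (C : Set G) ⊆ (F : Set G) * (L ⊓ C : Subgroup G) := by
    rw [mul_inf_assoc F L C hFab, ← normal_mul, hL.sup_eq_top, coe_top, Set.univ_inter]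
  have hFK : F ≤ normalizer (L ⊓ C : Subgroup G) := fun f hf =>
    centralizer_le_normalizer _ (mem_centralizer_iff.mpr fun k hk => (hk.2 f hf).symm)
  have hKn : ((L ⊓ C).subgroupOf C).Normal := by
    refine (normal_subgroupOf_iff_le_normalizer inf_le_right).mpr fun c hc => ?_
    obtain ⟨f, hf, k, hk, rfl⟩ := hdecomp hc
    exact mul_mem (hFK hf) (le_normalizer hk)
  have hK : L ⊓ C = ⊥ := hF.eq_bot_of_isSubnormal hE
    (.step _ _ inf_le_right (normal_centralizer (H := F)).isSubnormal hKn)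
    (disjoint_iff.mp (hL.disjoint.symm.mono_left inf_le_left))
  intro c hc
  obtain ⟨f, hf, k, hk, rfl⟩ := hdecomp hc
  rw [hK, coe_bot, Set.mem_singleton_iff] at hk
  simpa [hk] using hf

end Centralizer

section MinFANormal

variable {G : Type*} [Group G] {F A N : Subgroup G}

theorem IsMinFANormal.le_normalizer (hN : IsMinFANormal F A N) : F ⊔ A ≤ normalizer (N : Set G) :=
  le_normalizer_iff.mpr hN.2.2.1

theorem IsMinFANormal.le_of_inf_ne_bot (hN : IsMinFANormal F A N) {H : Subgroup G}
    (hH : F ⊔ A ≤ normalizer (N ⊓ H : Subgroup G)) (hne : N ⊓ H ≠ ⊥) : N ≤ H :=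
  (hN.2.2.2 _ inf_le_left hne (le_normalizer_iff.mp hH)).ge.trans inf_le_right

theorem IsMinFANormal.le_centralizer (hN : IsMinFANormal F A N) [F.Normal]
    [Group.IsNilpotent F] : N ≤ centralizer F :=
  hN.le_of_inf_ne_bot ((le_inf hN.le_normalizer le_normalizer_of_normal).trans
      inf_normalizer_le_normalizer_inf)
    (inf_centralizer_ne_bot_of_isNilpotent hN.1 (le_sup_left.trans hN.le_normalizer) hN.2.1)

theorem IsMinFANormal.le_centralizer_singleton (hN : IsMinFANormal F A N)
    (hFab : F ≤ centralizer F) (hA : ∀ x ∈ A, ∀ y ∈ A, x * y = y * x) {a y : G} (ha : a ∈ A)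
    (hy : y ∈ N) (hy1 : y ≠ 1) (hay : y ∈ centralizer {a}) : N ≤ centralizer {a} := by
  refine hN.le_of_inf_ne_bot (sup_le ?_ ?_) ?_
  · exact fun f hf => centralizer_le_normalizer _
      (mem_centralizer_iff.mpr fun n hn => hFab hf n (hN.1 hn.1))
  · have hAa : A ≤ centralizer {a} := fun b hb => mem_centralizer_singleton_iff.mpr (hA b hb a ha)
    exact (le_inf (le_sup_right.trans hN.le_normalizer) (hAa.trans Subgroup.le_normalizer)).trans
      inf_normalizer_le_normalizer_inf
  · exact fun h0 => hy1 (mem_bot.mp (h0 ▸ mem_inf.mpr ⟨hy, hay⟩))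

end MinFANormal

section Products

variable {G : Type*} [Group G]

theorem Subgroup.mem_centralizer_of_noncommPiCoprod_mem_centralizer {ι : Type*} [Fintype ι]
    {H : ι → Subgroup G} {hcomm : Pairwise fun i j => ∀ x y, x ∈ H i → y ∈ H j → Commute x y}
    (hind : iSupIndep H) {a : G} (ha : ∀ i, a ∈ normalizer (H i : Set G)) {u : ∀ i, H i}
    (hau : noncommPiCoprod hcomm u ∈ centralizer {a}) (i : ι) : (u i : G) ∈ centralizer {a} := by
  let v : ∀ i, H i := fun i => ⟨a * u i * a⁻¹, (mem_normalizer_iff.mp (ha i) _).mp (u i).2⟩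
  have hv : noncommPiCoprod hcomm v = MulAut.conj a (noncommPiCoprod hcomm u) := by
    rw [noncommPiCoprod_apply, noncommPiCoprod_apply]
    exact (Finset.map_noncommProd _ _ _ (MulAut.conj a)).symm
  have hvu : v = u := injective_noncommPiCoprod_of_iSupIndep hind <| by
    rw [hv, MulAut.conj_apply, mul_inv_eq_iff_eq_mul]
    exact (mem_centralizer_singleton_iff.mp hau).symm
  rw [mem_centralizer_singleton_iff, eq_comm, ← mul_inv_eq_iff_eq_mul]
  exact congrArg Subtype.val (congrFun hvu i)

theorem mem_centralizer_of_mem_inf_conjSub {F A : Subgroup G} [F.Normal] (hAF : A ⊓ F = ⊥)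
    {x a : G} (hx : x ∈ F) (ha : a ∈ A ⊓ conjSub A x) : x ∈ centralizer {a} := by
  obtain ⟨haA, hax⟩ := mem_inf.mp ha
  obtain ⟨b, hb, rfl⟩ := mem_map.mp hax
  simp only [MulEquiv.coe_toMonoidHom, MulAut.conj_apply] at haA ⊢
  have hbF : b⁻¹ * (x * b * x⁻¹) ∈ A ⊓ F := by
    refine mem_inf.mpr ⟨A.mul_mem (A.inv_mem hb) haA, ?_⟩
    simpa only [mul_assoc] using mul_mem (‹F.Normal›.conj_mem' x hx b) (inv_mem hx)
  rw [hAF, mem_bot, inv_mul_eq_one] at hbF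
  rw [← hbF, mem_centralizer_singleton_iff, eq_comm, ← eq_mul_inv_iff_mul_eq]
  exact hbF

end Products

theorem stmt_10_general {G : Type*} [Group G] [Finite G]
    (hE : TrivialLayer G)
    (F L : Subgroup G) (hF : IsFitting F) (hL : F.IsComplement' L)
    (A : Subgroup G) (hab : ∀ x ∈ A, ∀ y ∈ A, x * y = y * x) (hAF : A ⊓ F = ⊥)
    (hss : ∃ (k : ℕ) (Nf : Fin k → Subgroup G),
      (∀ i, IsMinFANormal F A (Nf i)) ∧ (⨆ i, Nf i) = F ∧
      ∀ i, Nf i ⊓ (⨆ j ∈ {j | j ≠ i}, Nf j) = ⊥) :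
    ∃ x ∈ F, A ⊓ conjSub A x = ⊥ := by
  obtain ⟨k, Nf, hmin, hsup, hind⟩ := hss
  have := hF.1
  have := hF.2.1
  have hFab : F ≤ centralizer F := hsup.ge.trans (iSup_le fun i => (hmin i).le_centralizer)
  have hcomm : Pairwise fun i j => ∀ x y, x ∈ Nf i → y ∈ Nf j → Commute x y :=
    fun i j _ x y hx hy => hFab ((hmin j).1 hy) x ((hmin i).1 hx)
  choose u hu using fun i => ne_bot_iff_exists_ne_one.mp (hmin i).2.1
  have hxF : noncommPiCoprod hcomm u ∈ F := by
    rw [← hsup, ← noncommPiCoprod_range (hcomm := hcomm)]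
    exact ⟨u, rfl⟩
  refine ⟨_, hxF, eq_bot_iff.mpr fun a ha => ?_⟩
  have haA := (mem_inf.mp ha).1
  have hua := mem_centralizer_of_noncommPiCoprod_mem_centralizer
    (iSupIndep_def.mpr fun i => disjoint_iff.mpr (hind i))
    (fun i => (hmin i).le_normalizer (mem_sup_right haA))
    (mem_centralizer_of_mem_inf_conjSub hAF hxF ha)
  have hFa : F ≤ centralizer {a} := hsup.ge.trans <| iSup_le fun i =>
    (hmin i).le_centralizer_singleton hFab hab haA (u i).2 (fun h => hu i (Subtype.ext h)) (hua i)
  have haF : a ∈ F := hF.centralizer_le hE hFab hL <|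
    mem_centralizer_iff.mpr fun f hf => mem_centralizer_singleton_iff.mp (hFa hf)
  exact hAF ▸ mem_inf.mpr ⟨haA, haF⟩

/-- Let `G` be a finite group with `Φ(G) = 1` and `E(G) = 1`, written `G = F(G) ⋊ L`.
If `A` is an abelian subgroup with `A ∩ F(G) = 1` acting semisimply on `F(G)` (i.e.
`F(G)` is a direct product of minimal normal subgroups of `F(G) ⋊ A`), then there is
`x ∈ F(G)` with `A ∩ A^x = 1`; in particular `b(G, A) ≤ 2`. -/
theorem stmt_10 {G : Type*} [Group G] [Finite G]
    (hΦ : frattini G = ⊥) (hE : TrivialLayer G)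
    (F L : Subgroup G) (hF : IsFitting F) (hL : F.IsComplement' L)
    (A : Subgroup G) (hab : ∀ x ∈ A, ∀ y ∈ A, x * y = y * x) (hAF : A ⊓ F = ⊥)
    (hss : ∃ (k : ℕ) (Nf : Fin k → Subgroup G),
      (∀ i, IsMinFANormal F A (Nf i)) ∧ (⨆ i, Nf i) = F ∧
      ∀ i, Nf i ⊓ (⨆ j ∈ {j | j ≠ i}, Nf j) = ⊥) :
    ∃ x ∈ F, A ⊓ conjSub A x = ⊥ :=
  stmt_10_general hE F L hF hL A hab hAF hss
end
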